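/- Let H = {x ∈ ℝⁿ : aᵀx ≤ b} be a half-space. Under the affine transformations x ↦ c(1−α) + pα + G(1−α)ξ with G invertible, the images of H at levels α₁ ≤ α₂ < 1 are half-spaces H^{α₁}, H^{α₂} with parallel, equally-directed normal vectors, and H^{α₂} ⊆ H^{α₁} whenever p satisfies aᵀG^{-1}(p − c) ≤ b·0 + b (i.e. p lies in the image of H under ξ ↦ c + Gξ). -/

import Mathlib

open Matrix

section

variable {𝕜 ι : Type*} [Field 𝕜] [LinearOrder 𝕜] [IsStrictOrderedRing 𝕜]
  [Fintype ι] [DecidableEq ι]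

theorem Matrix.image_affine_halfspace {M : Matrix ι ι 𝕜} (hM : IsUnit M.det)
    (d a : ι → 𝕜) (b : 𝕜) :
    (fun ξ => d + M *ᵥ ξ) '' {ξ | a ⬝ᵥ ξ ≤ b} =
      {x | (a ᵥ* M⁻¹) ⬝ᵥ x ≤ b + (a ᵥ* M⁻¹) ⬝ᵥ d} := by
  have left_inv : Function.LeftInverse (fun x => M⁻¹ *ᵥ (x - d)) (fun ξ => d + M *ᵥ ξ) :=
    fun ξ => by simp [mulVec_mulVec, nonsing_inv_mul M hM]
  have right_inv : Function.RightInverse (fun x => M⁻¹ *ᵥ (x - d)) (fun ξ => d + M *ᵥ ξ) :=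
    fun x => by simp [mulVec_mulVec, mul_nonsing_inv M hM]
  rw [Set.image_eq_preimage_of_inverse left_inv right_inv]
  ext x
  simp only [Set.mem_preimage, Set.mem_ofPred_eq, dotProduct_mulVec, dotProduct_sub]
  exact sub_le_iff_le_add

theorem Matrix.image_scaled_affine_halfspace {G : Matrix ι ι 𝕜} (hG : IsUnit G.det)
    {t : 𝕜} (ht : 0 < t) (d a : ι → 𝕜) (b : 𝕜) :
    (fun ξ => d + (t • G) *ᵥ ξ) '' {ξ | a ⬝ᵥ ξ ≤ b} =
      {x | (a ᵥ* G⁻¹) ⬝ᵥ x ≤ t * b + (a ᵥ* G⁻¹) ⬝ᵥ d} := by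
  have htG : IsUnit (t • G).det := by
    rw [det_smul]; exact (IsUnit.pow _ ht.ne'.isUnit).mul hG
  have hinv : (t • G)⁻¹ = t⁻¹ • G⁻¹ :=
    inv_eq_left_inv (by simp [smul_smul, ht.ne', nonsing_inv_mul G hG])
  rw [image_affine_halfspace htG, hinv]
  ext x
  simp only [Set.mem_ofPred_eq, vecMul_smul, smul_dotProduct, smul_eq_mul, inv_mul_le_iff₀ ht,
    mul_add, mul_inv_cancel_left₀ ht.ne']

end

theorem dotProduct_lineMap {R ι : Type*} [CommRing R] [Fintype ι] (w c p : ι → R) (α : R) :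
    w ⬝ᵥ ((1 - α) • c + α • p) = w ⬝ᵥ c + α * w ⬝ᵥ (p - c) := by
  simp only [dotProduct_add, dotProduct_smul, dotProduct_sub, smul_eq_mul]
  ring

theorem halfspace_images_nested_general {n : ℕ} (G : Matrix (Fin n) (Fin n) ℝ)
    (hG : IsUnit G.det) (a : Fin n → ℝ) (b : ℝ)
    (c p : Fin n → ℝ) (α₁ α₂ : ℝ)
    (h12 : α₁ ≤ α₂) (h2 : α₂ < 1)
    (hp : a ⬝ᵥ G⁻¹.mulVec (p - c) ≤ b * 0 + b) :
    ∃ (a₁ a₂ : Fin n → ℝ) (b₁ b₂ : ℝ) (lam : ℝ), 0 < lam ∧ a₂ = lam • a₁ ∧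
      ((fun x => (1 - α₁) • c + α₁ • p + ((1 - α₁) • G).mulVec x) ''
          {x | a ⬝ᵥ x ≤ b} = {x | a₁ ⬝ᵥ x ≤ b₁}) ∧
      ((fun x => (1 - α₂) • c + α₂ • p + ((1 - α₂) • G).mulVec x) ''
          {x | a ⬝ᵥ x ≤ b} = {x | a₂ ⬝ᵥ x ≤ b₂}) ∧
      {x | a₂ ⬝ᵥ x ≤ b₂} ⊆ {x | a₁ ⬝ᵥ x ≤ b₁} := by
  set w := a ᵥ* G⁻¹
  -- At level `α` the image is `{x | w ⬝ᵥ x ≤ b + w ⬝ᵥ c + α * (w ⬝ᵥ (p - c) - b)}`,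
  -- and `hp` says exactly that this offset is antitone in `α`.
  have hwp : w ⬝ᵥ (p - c) ≤ b := by rw [← dotProduct_mulVec]; linarith
  have hoffset : (1 - α₂) * b + w ⬝ᵥ ((1 - α₂) • c + α₂ • p) ≤
      (1 - α₁) * b + w ⬝ᵥ ((1 - α₁) • c + α₁ • p) := by
    rw [dotProduct_lineMap, dotProduct_lineMap]
    nlinarith [mul_nonneg (sub_nonneg.2 h12) (sub_nonneg.2 hwp)]
  refine ⟨w, w, _, _, 1, one_pos, (one_smul ℝ w).symm,
    image_scaled_affine_halfspace hG (by linarith) _ a b,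
    image_scaled_affine_halfspace hG (by linarith) _ a b,
    Set.ofPred_subset_ofPred.2 fun x hx => hx.trans hoffset⟩

/-- Affine images of a half-space through the nested-zonotope transformations are
half-spaces with parallel equally-directed normals, and are nested whenever the core
point `p` lies in the image of `H` under `ξ ↦ c + Gξ`. -/
theorem halfspace_images_nested {n : ℕ} (G : Matrix (Fin n) (Fin n) ℝ)
    (hG : IsUnit G.det) (a : Fin n → ℝ) (ha : a ≠ 0) (b : ℝ)
    (c p : Fin n → ℝ) (α₁ α₂ : ℝ)
    (h0 : 0 ≤ α₁) (h12 : α₁ ≤ α₂) (h2 : α₂ < 1)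
    (hp : a ⬝ᵥ G⁻¹.mulVec (p - c) ≤ b * 0 + b) :
    ∃ (a₁ a₂ : Fin n → ℝ) (b₁ b₂ : ℝ) (lam : ℝ), 0 < lam ∧ a₂ = lam • a₁ ∧
      ((fun x => (1 - α₁) • c + α₁ • p + ((1 - α₁) • G).mulVec x) ''
          {x | a ⬝ᵥ x ≤ b} = {x | a₁ ⬝ᵥ x ≤ b₁}) ∧
      ((fun x => (1 - α₂) • c + α₂ • p + ((1 - α₂) • G).mulVec x) ''
          {x | a ⬝ᵥ x ≤ b} = {x | a₂ ⬝ᵥ x ≤ b₂}) ∧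
      {x | a₂ ⬝ᵥ x ≤ b₂} ⊆ {x | a₁ ⬝ᵥ x ≤ b₁} :=
  halfspace_images_nested_general G hG a b c p α₁ α₂ h12 h2 hp
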